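/- There exists a constant C > 0 such that the following holds for every odd prime power q: let ρ satisfy C/√q ≤ ρ ≤ 1, let x ∈ F_q², let a, b ∈ F_q with a ≠ 0, b ≠ 0, and let A, B ⊆ F_q² with A contained in the circle {y : ‖x−y‖ = a}, B contained in the circle {z : ‖x−z‖ = b}, |A| > ρq and |B| > ρq. Then the number of distinct values c ∈ F_q of the form c = ‖y−z‖ with y ∈ A and z ∈ B is at least ρq/4. -/

import Mathlib

/-- The norm `‖x‖ = x₁² + x₂²` on `F_q²`. -/
def fnorm {F : Type*} [Field F] (x : Fin 2 → F) : F := x 0 ^ 2 + x 1 ^ 2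

/-!
Fix any `y ∈ A`. As `‖x - y‖ = a ≠ 0` and the characteristic is odd, the circle around `y` of a
given radius meets the circle around `x` carrying `B` in at most two points. So `z ↦ ‖y - z‖` is
at most two-to-one on `B` and already produces more than `ρq / 2` distances; any `C > 0` works.
-/

lemma two_ne_zero_of_odd_card {F : Type*} [Field F] [Fintype F] (h : Odd (Fintype.card F)) :
    (2 : F) ≠ 0 :=
  Ring.two_ne_zero fun hchar => by
    have := FiniteField.even_card_iff_char_two.mp hchar
    rw [Nat.odd_iff] at h
    omega

lemma card_nthRootsFinset_le {R : Type*} [CommRing R] [IsDomain R] (n : ℕ) (d : R) :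
    (Polynomial.nthRootsFinset n d).card ≤ n := by
  classical
  rw [Polynomial.nthRootsFinset_def]
  exact (Multiset.toFinset_card_le _).trans (Polynomial.card_nthRoots n d)

section Circles

variable {F : Type*} [Field F]

def cross (u p : Fin 2 → F) : F := u 0 * p 1 - u 1 * p 0

lemma fnorm_sub (p u : Fin 2 → F) : fnorm (p - u) = fnorm p - 2 * (u ⬝ᵥ p) + fnorm u := by
  simp only [fnorm, dotProduct, Fin.sum_univ_two, Pi.sub_apply]; ring

lemma fnorm_mul_fnorm (u p : Fin 2 → F) :
    fnorm u * fnorm p = (u ⬝ᵥ p) ^ 2 + cross u p ^ 2 := by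
  simp only [fnorm, cross, dotProduct, Fin.sum_univ_two]; ring

lemma eq_of_dotProduct_eq_of_cross_eq {u p p' : Fin 2 → F} (hu : fnorm u ≠ 0)
    (hdot : u ⬝ᵥ p = u ⬝ᵥ p') (hcross : cross u p = cross u p') : p = p' := by
  simp only [fnorm, cross, dotProduct, Fin.sum_univ_two] at hu hdot hcross
  refine funext (Fin.forall_fin_two.mpr ⟨?_, ?_⟩)
  · exact mul_left_cancel₀ hu (by linear_combination u 0 * hdot - u 1 * hcross)
  · exact mul_left_cancel₀ hu (by linear_combination u 1 * hdot + u 0 * hcross)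

lemma ncard_circle_inter_circle_le_two (h2 : (2 : F) ≠ 0) {x y : Fin 2 → F}
    (hxy : fnorm (x - y) ≠ 0) (b c : F) :
    {z : Fin 2 → F | fnorm (x - z) = b ∧ fnorm (y - z) = c}.ncard ≤ 2 := by
  set u := x - y
  set k := (b + fnorm u - c) / 2
  -- writing `p = x - z`, the intersection lies on the line `u ⬝ᵥ p = k`, on which `cross u p`
  -- determines `p` and takes at most two values
  have hdot : ∀ z, fnorm (x - z) = b → fnorm (y - z) = c → u ⬝ᵥ (x - z) = k := by
    intro z hb hc
    have : y - z = (x - z) - u := by simp [u]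
    rw [this, fnorm_sub, hb] at hc
    rw [eq_div_iff h2]
    linear_combination -hc
  have hcross : ∀ z, fnorm (x - z) = b → fnorm (y - z) = c →
      cross u (x - z) ^ 2 = fnorm u * b - k ^ 2 := by
    intro z hb hc
    have := fnorm_mul_fnorm u (x - z)
    rw [hb, hdot z hb hc] at this
    linear_combination -this
  calc _ ≤ (Polynomial.nthRootsFinset 2 (fnorm u * b - k ^ 2) : Set F).ncard :=
        Set.ncard_le_ncard_of_injOn (fun z => cross u (x - z))
          (fun z hz => by simpa using hcross z hz.1 hz.2)
          (fun z hz z' hz' h => sub_right_injective <| eq_of_dotProduct_eq_of_cross_eq hxy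
            ((hdot z hz.1 hz.2).trans (hdot z' hz'.1 hz'.2).symm) h)
          (Finset.finite_toSet _)
    _ ≤ 2 := by
      rw [Set.ncard_coe_finset]
      exact card_nthRootsFinset_le 2 _

lemma ncard_le_two_mul_ncard_image_fnorm_sub [Finite F] (h2 : (2 : F) ≠ 0) {x y : Fin 2 → F}
    (hxy : fnorm (x - y) ≠ 0) {b : F} {B : Set (Fin 2 → F)}
    (hBx : B ⊆ {z | fnorm (x - z) = b}) :
    B.ncard ≤ 2 * ((fun z => fnorm (y - z)) '' B).ncard := by
  classical
  lift B to Finset (Fin 2 → F) using B.toFinite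
  rw [Set.ncard_coe_finset, ← Finset.coe_image, Set.ncard_coe_finset]
  refine Finset.card_le_mul_card_image _ 2 fun c _ => ?_
  rw [← Set.ncard_coe_finset]
  refine (Set.ncard_le_ncard (fun z hz => ?_) (Set.toFinite _)).trans
    (ncard_circle_inter_circle_le_two h2 hxy b c)
  rw [Finset.coe_filter] at hz
  exact ⟨hBx hz.1, hz.2⟩

end Circles

theorem stmt_15 :
    ∃ C > (0 : ℝ),
      ∀ (F : Type) [Field F] [Fintype F], Odd (Fintype.card F) →
        ∀ (ρ : ℝ), C / Real.sqrt (Fintype.card F) ≤ ρ → ρ ≤ 1 →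
          ∀ (x : Fin 2 → F) (a b : F), a ≠ 0 → b ≠ 0 →
            ∀ (A B : Set (Fin 2 → F)),
              A ⊆ {y : Fin 2 → F | fnorm (x - y) = a} →
              B ⊆ {z : Fin 2 → F | fnorm (x - z) = b} →
              ρ * (Fintype.card F : ℝ) < (A.ncard : ℝ) →
              ρ * (Fintype.card F : ℝ) < (B.ncard : ℝ) →
              ρ * (Fintype.card F : ℝ) / 4 ≤
                (Set.ncard {c : F | ∃ y ∈ A, ∃ z ∈ B, fnorm (y - z) = c} : ℝ) := by
  refine ⟨1, one_pos, fun F _ _ hodd ρ hρ _ x a b ha _ A B hA hB hAcard hBcard => ?_⟩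
  have hρq : 0 < ρ * Fintype.card F := by
    have hq : (0 : ℝ) < Fintype.card F := by exact_mod_cast Fintype.card_pos
    exact mul_pos (lt_of_lt_of_le (by positivity) hρ) hq
  obtain ⟨y, hy⟩ : A.Nonempty := Set.nonempty_of_ncard_ne_zero <| by
    rintro h
    rw [h, Nat.cast_zero] at hAcard
    linarith
  have hpinned : (fun z => fnorm (y - z)) '' B ⊆ {c | ∃ y ∈ A, ∃ z ∈ B, fnorm (y - z) = c} :=
    fun _ ⟨z, hz, hc⟩ => ⟨y, hy, z, hz, hc⟩
  have hxy : fnorm (x - y) ≠ 0 := (hA hy).symm ▸ ha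
  have hB2 : B.ncard ≤ 2 * {c | ∃ y ∈ A, ∃ z ∈ B, fnorm (y - z) = c}.ncard :=
    (ncard_le_two_mul_ncard_image_fnorm_sub (two_ne_zero_of_odd_card hodd) hxy hB).trans
      (Nat.mul_le_mul_left 2 (Set.ncard_le_ncard hpinned (Set.toFinite _)))
  have : (B.ncard : ℝ) ≤ 2 * {c | ∃ y ∈ A, ∃ z ∈ B, fnorm (y - z) = c}.ncard := by
    exact_mod_cast hB2
  linarith
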